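/- arXiv:0904.0474 — 3 statements merged into one kernel-verified Lean document; each statement's English description precedes it below -/
import Mathlib

section
/- Let U ⊆ ℝ be an open interval and let g_1,…,g_k: U → ℝ be real-analytic functions, linearly independent over ℝ, such that the Wronski matrix G(x) = ( g_j^{(i−1)}(x) )_{1≤i,j≤k} is invertible for every x ∈ U. Then G, regarded as the map x ↦ G(x) with rows g_i(x) = ( g_1^{(i−1)}(x), …, g_k^{(i−1)}(x) ), is hierarchic on U. -/
open MeasureTheory Metric Filter

noncomputable section

/-- `G` is hierarchic on `B`: for every subspace `V ⊆ ℝ^k` of codimension `r` with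
`1 ≤ r ≤ k − 1`, the set `{x ∈ B : V ⊕ span(g₁(x), …, g_r(x)) = ℝ^k}` is dense
in `B`, where `g_i(x)` denotes the `i`-th row of `G(x)`. -/
def Hierarchic {X : Type*} [TopologicalSpace X] {k : ℕ}
    (G : X → Matrix (Fin k) (Fin k) ℝ) (B : Set X) : Prop :=
  ∀ V : Submodule ℝ (Fin k → ℝ),
    0 < Module.finrank ℝ V → Module.finrank ℝ V < k →
    B ⊆ closure {x ∈ B | IsCompl V (Submodule.span ℝ
      ((fun j => G x j) '' {j : Fin k | (j : ℕ) < k - Module.finrank ℝ V}))}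

/-- The Wronski matrix of `g₁, …, g_k`: its `i`-th row is the vector of `(i−1)`-th
derivatives `(g₁^{(i−1)}(x), …, g_k^{(i−1)}(x))`. -/
def wronskiMatrix {k : ℕ} (g : Fin k → ℝ → ℝ) (x : ℝ) : Matrix (Fin k) (Fin k) ℝ :=
  Matrix.of fun i j : Fin k => iteratedDeriv (i : ℕ) (g j) x

open Set Module
open scoped ContDiff

/-!
Choose a basis `φ₁, …, φ_r` of the annihilator of `V` and put `f_s = φ_s ∘ (g₁, …, g_k)`. The
`r × r` Wronski matrix of the `f_s` at `x` is `(φ_s(g_i(x)))_{i,s}`, so `V` and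
`span(g₁(x), …, g_r(x))` are complementary wherever the Wronskian of `f` does not vanish. This
Wronskian is analytic, so if it vanished near a point of `U` it would vanish on all of `U`, and
then, by Bôcher's theorem, the `f_s`, hence the `g_j`, would satisfy a nontrivial linear relation.
Bôcher's theorem is proved by induction on the number of functions: where `f₀ ≠ 0`, the Wronskian
of `f₀, …, f_n` is `f₀^{n+1}` times that of the derivatives of `f₁ / f₀, …, f_n / f₀`.
-/

theorem isCompl_span_range_of_det_ne_zero {K E : Type*} [Field K] [AddCommGroup E] [Module K E]
    [FiniteDimensional K E] {V : Submodule K E} {r : ℕ} (hr : finrank K V + r = finrank K E)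
    (φ : Fin r → Dual K E) (hφ : ∀ s, ∀ v ∈ V, φ s v = 0) (e : Fin r → E)
    (he : (Matrix.of fun i s => φ s (e i)).det ≠ 0) :
    IsCompl V (Submodule.span K (range e)) := by
  have hcoeff : ∀ c : Fin r → K, ∑ i, c i • e i ∈ V → c = 0 := fun c hc =>
    Matrix.eq_zero_of_vecMul_eq_zero he <| funext fun s => by
      simpa [Matrix.vecMul, dotProduct] using hφ s _ hc
  have hli : LinearIndependent K e := Fintype.linearIndependent_iff.mpr fun c hc =>
    congrFun (hcoeff c (hc ▸ V.zero_mem))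
  refine (Submodule.isCompl_iff_disjoint _ _ ?_).mpr ?_
  · rw [finrank_span_eq_card hli, Fintype.card_fin, hr]
  · refine Submodule.disjoint_def.mpr fun v hv hspan => ?_
    obtain ⟨c, rfl⟩ := (Submodule.mem_span_range_iff_exists_fun K).mp hspan
    simp [hcoeff c hv]

theorem AnalyticOnNhd.subset_closure_setOf_ne_zero {𝕜 E F : Type*} [NontriviallyNormedField 𝕜]
    [NormedAddCommGroup E] [NormedSpace 𝕜 E] [NormedAddCommGroup F] [NormedSpace 𝕜 F]
    {f : E → F} {U : Set E} (hf : AnalyticOnNhd 𝕜 f U) (hU : IsOpen U) (hUc : IsPreconnected U)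
    (hf0 : ¬ EqOn f 0 U) : U ⊆ closure {x ∈ U | f x ≠ 0} := by
  intro x hx
  by_contra hcl
  rw [mem_closure_iff_frequently, Filter.not_frequently] at hcl
  refine hf0 (hf.eqOn_zero_of_preconnected_of_eventuallyEq_zero hUc hx ?_)
  filter_upwards [hcl, hU.mem_nhds hx] with y hy hyU
  simpa [hyU] using hy

theorem AnalyticOnNhd.det_wronskiMatrix {n : ℕ} {f : Fin n → ℝ → ℝ} {U : Set ℝ}
    (hf : ∀ j, AnalyticOnNhd ℝ (f j) U) :
    AnalyticOnNhd ℝ (fun x => (wronskiMatrix f x).det) U := by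
  simp only [Matrix.det_apply', wronskiMatrix, Matrix.of_apply, iteratedDeriv_eq_iterate]
  exact Finset.analyticOnNhd_fun_sum _ fun σ _ => analyticOnNhd_const.mul
    (Finset.analyticOnNhd_fun_prod _ fun i _ => (hf i).iterated_deriv _)

theorem wronskiMatrix_dual_comp {k r : ℕ} (hrk : r ≤ k) {g : Fin k → ℝ → ℝ} {x : ℝ}
    (hg : ∀ j, ContDiffAt ℝ ∞ (g j) x) (φ : Fin r → Dual ℝ (Fin k → ℝ)) :
    wronskiMatrix (fun s y => φ s fun j => g j y) x =
      Matrix.of fun i s => φ s (wronskiMatrix g x (Fin.castLE hrk i)) := by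
  ext i s
  have hφ (v : Fin k → ℝ) : φ s v = ∑ j, v j * φ s fun m => if j = m then 1 else 0 :=
    LinearMap.pi_apply_eq_sum_univ (φ s) v
  simp only [wronskiMatrix, Matrix.of_apply, hφ (fun j => g j _)]
  rw [iteratedDeriv_fun_sum fun j _ => ((hg j).of_le (mod_cast le_top)).mul contDiffAt_const, hφ]
  simp [iteratedDeriv_mul_const_field]

theorem det_wronskiMatrix_mul {n : ℕ} {q : Fin n → ℝ → ℝ} {u : ℝ → ℝ} {x : ℝ}
    (hq : ∀ j, ContDiffAt ℝ ∞ (q j) x) (hu : ContDiffAt ℝ ∞ u x) :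
    (wronskiMatrix (fun j y => q j y * u y) x).det = u x ^ n * (wronskiMatrix q x).det := by
  let ℓ (i m : ℕ) : ℝ := if m ≤ i then (i.choose m : ℝ) * iteratedDeriv (i - m) u x else 0
  let L : Matrix (Fin n) (Fin n) ℝ := Matrix.of fun i m => ℓ i m
  have hL : L.det = u x ^ n := by
    rw [Matrix.det_of_isLowerTriangular L fun i m h => if_neg (not_le.mpr h)]
    simp [L, ℓ]
  suffices wronskiMatrix (fun j y => q j y * u y) x = L * wronskiMatrix q x by
    rw [this, Matrix.det_mul, hL]
  ext i j
  simp only [wronskiMatrix, Matrix.mul_apply, Matrix.of_apply, L]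
  rw [Fin.sum_univ_eq_sum_range (fun m => ℓ i m * iteratedDeriv m (q j) x),
    iteratedDeriv_fun_mul ((hq j).of_le (mod_cast le_top)) (hu.of_le (mod_cast le_top))]
  have hℓ (m : ℕ) : ℓ i m ≠ 0 → m ∈ Finset.range (i + 1) := by
    simp +contextual [ℓ]
  rw [← Finset.sum_subset (Finset.range_subset_range.mpr i.isLt) fun m _ hm =>
    by rw [not_imp_comm.mp (hℓ m) hm, zero_mul]]
  refine Finset.sum_congr rfl fun m hm => ?_
  simp only [ℓ, if_pos (Nat.lt_succ_iff.mp (Finset.mem_range.mp hm))]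
  ring

theorem det_wronskiMatrix_cons_one {n : ℕ} (q : Fin n → ℝ → ℝ) (x : ℝ) :
    (wronskiMatrix (Fin.cons (fun _ => 1) q) x).det =
      (wronskiMatrix (fun j => deriv (q j)) x).det := by
  rw [Matrix.det_succ_column_zero, Fin.sum_univ_succ, Finset.sum_eq_zero]
  · simp [wronskiMatrix, Matrix.submatrix, iteratedDeriv_succ']
  · intro i _
    simp [wronskiMatrix, iteratedDeriv_const]

theorem det_wronskiMatrix_eq_pow_mul_det_wronskiMatrix_deriv_div {n : ℕ}
    {f : Fin (n + 1) → ℝ → ℝ} {x : ℝ} (hf : ∀ j, ContDiffAt ℝ ∞ (f j) x) (hf0 : f 0 x ≠ 0) :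
    (wronskiMatrix f x).det =
      f 0 x ^ (n + 1) * (wronskiMatrix (fun j => deriv fun y => f j.succ y / f 0 y) x).det := by
  let q : Fin (n + 1) → ℝ → ℝ := Fin.cons (fun _ => 1) fun j y => f j.succ y / f 0 y
  have hq (j : Fin (n + 1)) : ContDiffAt ℝ ∞ (q j) x :=
    j.cases contDiffAt_const fun j => (hf j.succ).div (hf 0) hf0
  have hfq : wronskiMatrix f x = wronskiMatrix (fun j y => q j y * f 0 y) x := by
    ext i j
    refine Filter.EventuallyEq.iteratedDeriv_eq _ ?_
    filter_upwards [(hf 0).continuousAt.eventually_ne hf0] with y hy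
    cases j using Fin.cases <;> simp [q, hy]
  rw [hfq, det_wronskiMatrix_mul hq (hf 0), det_wronskiMatrix_cons_one]

theorem exists_linear_relation_of_det_wronskiMatrix_eqOn_zero {n : ℕ} {U : Set ℝ}
    {f : Fin n → ℝ → ℝ} (hU : IsOpen U) (hUc : IsPreconnected U) (hne : U.Nonempty)
    (hf : ∀ j, AnalyticOnNhd ℝ (f j) U) (hW : EqOn (fun x => (wronskiMatrix f x).det) 0 U) :
    ∃ c : Fin n → ℝ, c ≠ 0 ∧ ∀ x ∈ U, ∑ j, c j * f j x = 0 := by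
  induction n generalizing U with
  | zero =>
    obtain ⟨x, hx⟩ := hne
    simpa using hW hx
  | succ n ih =>
    by_cases h0 : EqOn (f 0) 0 U
    · exact ⟨Pi.single 0 1, by simp, fun x hx => by simpa [Fin.sum_univ_succ] using h0 hx⟩
    obtain ⟨x₁, hx₁, hfx₁⟩ : ∃ x ∈ U, f 0 x ≠ 0 := by simpa [EqOn] using h0
    obtain ⟨ε, hε, hball⟩ := eventually_nhds_iff_ball.mp
      ((hU.eventually_mem hx₁).and ((hf 0 x₁ hx₁).continuousAt.eventually_ne hfx₁))
    have hB : IsPreconnected (ball x₁ ε) := (convex_ball x₁ ε).isPreconnected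
    let q (j : Fin n) (y : ℝ) := f j.succ y / f 0 y
    have hq (j : Fin n) : AnalyticOnNhd ℝ (q j) (ball x₁ ε) := fun y hy =>
      (hf j.succ y (hball y hy).1).div (hf 0 y (hball y hy).1) (hball y hy).2
    have hWq : EqOn (fun x => (wronskiMatrix (fun j => deriv (q j)) x).det) 0 (ball x₁ ε) := by
      intro y hy
      obtain ⟨hyU, hy0⟩ := hball y hy
      have := det_wronskiMatrix_eq_pow_mul_det_wronskiMatrix_deriv_div
        (fun j => (hf j y hyU).contDiffAt) hy0
      simpa [q, hW hyU, hy0] using this.symm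
    obtain ⟨c, hc, hcq⟩ := ih isOpen_ball hB ⟨x₁, mem_ball_self hε⟩ (fun j => (hq j).deriv) hWq
    obtain ⟨a, ha⟩ : ∃ a, ∀ y ∈ ball x₁ ε, ∑ j, c j * q j y = a := by
      refine isOpen_ball.exists_is_const_of_deriv_eq_zero hB
        (fun y hy => (DifferentiableAt.fun_sum fun j _ =>
          ((hq j y hy).differentiableAt.const_mul _)).differentiableWithinAt) fun y hy => ?_
      rw [deriv_fun_sum fun j _ => (hq j y hy).differentiableAt.const_mul _]
      simpa using hcq y hy
    refine ⟨Fin.cons (-a) c, fun h => hc (funext fun j => by simpa using congrFun h j.succ), ?_⟩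
    refine (Finset.analyticOnNhd_fun_sum _ fun j _ => analyticOnNhd_const.mul (hf j))
      |>.eqOn_zero_of_preconnected_of_eventuallyEq_zero hUc hx₁ ?_
    filter_upwards [isOpen_ball.mem_nhds (mem_ball_self hε)] with y hy
    have h := ha y hy
    simp only [q, mul_div_assoc', ← Finset.sum_div, div_eq_iff (hball y hy).2] at h
    simp [Fin.sum_univ_succ, h]

theorem dual_eq_zero_of_forall_apply_eq_zero {k : ℕ} {g : Fin k → ℝ → ℝ} {U : Set ℝ}
    (hli : ∀ c : Fin k → ℝ, (∀ x ∈ U, ∑ j, c j * g j x = 0) → c = 0)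
    (ψ : Dual ℝ (Fin k → ℝ)) (hψ : ∀ x ∈ U, ψ (fun j => g j x) = 0) : ψ = 0 := by
  have hψ_eq (v : Fin k → ℝ) : ψ v = ∑ j, v j * ψ (Pi.single j 1) := by
    simp [LinearMap.pi_apply_eq_sum_univ ψ v, ← Pi.single_apply, Pi.single_comm]
  have hc := hli (fun j => ψ (Pi.single j 1)) fun x hx => by
    simpa [hψ_eq (fun j => g j x), mul_comm] using hψ x hx
  refine LinearMap.ext fun v => ?_
  simp [hψ_eq v, funext_iff.mp hc]

theorem wronskian_hierarchic_general (k : ℕ)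
    (U : Set ℝ) (hU : IsOpen U) (hconn : U.OrdConnected)
    (g : Fin k → ℝ → ℝ) (hg : ∀ j, AnalyticOnNhd ℝ (g j) U)
    (hli : ∀ c : Fin k → ℝ, (∀ x ∈ U, ∑ j, c j * g j x = 0) → c = 0) :
    Hierarchic (wronskiMatrix g) U := by
  intro V _ hVk x₀ hx₀
  set r := k - finrank ℝ V
  have hrk : r ≤ k := k.sub_le _
  have hr : finrank ℝ V + r = finrank ℝ (Fin k → ℝ) := by rw [finrank_fin_fun]; omega
  have : Free ℝ V.dualAnnihilator := Free.of_divisionRing ℝ V.dualAnnihilator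
  have b : Basis (Fin r) ℝ V.dualAnnihilator := finBasisOfFinrankEq _ _ <| by
    have := Subspace.finrank_add_finrank_dualAnnihilator_eq V; omega
  let φ (s : Fin r) : Dual ℝ (Fin k → ℝ) := b s
  let f (s : Fin r) (y : ℝ) : ℝ := φ s fun j => g j y
  have hf (s : Fin r) : AnalyticOnNhd ℝ (f s) U :=
    (LinearMap.toContinuousLinearMap (φ s)).comp_analyticOnNhd (AnalyticOnNhd.pi hg)
  have hD : ¬ EqOn (fun x => (wronskiMatrix f x).det) 0 U := fun hD0 => by
    obtain ⟨c, hc, hcf⟩ := exists_linear_relation_of_det_wronskiMatrix_eqOn_zero hU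
      hconn.isPreconnected ⟨x₀, hx₀⟩ hf hD0
    have hψ := dual_eq_zero_of_forall_apply_eq_zero hli (∑ s, c s • φ s) fun x hx => by
      simpa [f] using hcf x hx
    refine hc <| funext <| (Fintype.linearIndependent_iff (v := ⇑b)).mp b.linearIndependent c <|
      Subtype.ext ?_
    simp only [AddSubmonoidClass.coe_finsetSum, Submodule.coe_smul, ZeroMemClass.coe_zero]
    exact hψ
  refine closure_mono ?_ ((AnalyticOnNhd.det_wronskiMatrix hf).subset_closure_setOf_ne_zero hU
    hconn.isPreconnected hD hx₀)
  rintro x ⟨hx, hDx⟩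
  refine ⟨hx, ?_⟩
  rw [← Fin.range_castLE hrk, ← range_comp]
  refine isCompl_span_range_of_det_ne_zero hr φ
    (fun s => (Submodule.mem_dualAnnihilator _).mp (b s).2) _ ?_
  rw [Function.comp_def, ← wronskiMatrix_dual_comp hrk fun j => (hg j x hx).contDiffAt]
  exact hDx

/-- **Lemma 5.10**: the Wronski matrix of analytic functions `g₁, …, g_k`, linearly
independent over `ℝ` and with everywhere non-vanishing Wronskian, is hierarchic. -/
theorem wronskian_hierarchic (k : ℕ) (hk : 1 ≤ k)
    (U : Set ℝ) (hU : IsOpen U) (hconn : U.OrdConnected)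
    (g : Fin k → ℝ → ℝ) (hg : ∀ j, AnalyticOnNhd ℝ (g j) U)
    (hli : ∀ c : Fin k → ℝ, (∀ x ∈ U, ∑ j, c j * g j x = 0) → c = 0)
    (hW : ∀ x ∈ U, (wronskiMatrix g x).det ≠ 0) :
    Hierarchic (wronskiMatrix g) U :=
  wronskian_hierarchic_general k U hU hconn g hg hli
end
end

section
/- Let k ≥ 2 and let 0 < θ_1 ≤ θ_2 ≤ … ≤ θ_{k−1} ≤ θ_k be real numbers. Put θ = (θ_1 θ_2 ⋯ θ_k)^{1/k} and Θ̃ = max_{1 ≤ r ≤ k−1} (θ_1 θ_2 ⋯ θ_r)/θ^r. Then Θ̃ ≤ (θ_{k−1}/θ_k)^{1/k} ≤ 1. -/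
/-!
With `x i = log θ i`, the bound for the `r`-th term of `Θ̃` reads
`k * ∑_{i ≤ r} x i - (r + 1) * ∑ i, x i ≤ x (k - 2) - x (k - 1)`.
The left side is `∑_{i ≤ r < l} (x i - x l)`, a sum of terms that are nonpositive since `x` is
monotone, one of which is `x r - x (k - 1) ≤ x (k - 2) - x (k - 1)`.
-/

noncomputable section

def geoMean {k : ℕ} (θ : Fin k → ℝ) : ℝ := (∏ i, θ i) ^ ((1 : ℝ) / k)

/-- `Θ̃ = max_{1 ≤ r ≤ k−1} (θ₁ ⋯ θ_r)/θ^r`, with `r` shifted down by one. -/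
def ThetaTilde {k : ℕ} (θ : Fin k → ℝ) : ℝ :=
  ⨆ r : Fin (k - 1),
    (∏ i ∈ Finset.univ.filter fun i : Fin k => (i : ℕ) ≤ (r : ℕ), θ i) /
      geoMean θ ^ ((r : ℕ) + 1)

open Finset

namespace Finset

variable {ι R : Type*} [Fintype ι] [DecidableEq ι]

theorem card_mul_sum_sub_card_mul_sum [CommRing R] (s : Finset ι) (x : ι → R) :
    (Fintype.card ι : R) * ∑ i ∈ s, x i - (#s : R) * ∑ i, x i =
      ∑ p ∈ s ×ˢ sᶜ, (x p.1 - x p.2) := by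
  rw [sum_product, ← sum_add_sum_compl s x, ← card_add_card_compl s]
  simp only [sum_sub_distrib, sum_const, nsmul_eq_mul, ← mul_sum]
  push_cast
  ring

theorem card_mul_sum_sub_card_mul_sum_le [CommRing R] [PartialOrder R] [IsOrderedRing R]
    {s : Finset ι} {x : ι → R} (hx : ∀ i ∈ s, ∀ j ∉ s, x i ≤ x j) {a b : ι}
    (ha : a ∈ s) (hb : b ∉ s) :
    (Fintype.card ι : R) * ∑ i ∈ s, x i - (#s : R) * ∑ i, x i ≤ x a - x b := by
  rw [card_mul_sum_sub_card_mul_sum]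
  calc ∑ p ∈ s ×ˢ sᶜ, (x p.1 - x p.2) ≤ ∑ p ∈ {(a, b)}, (x p.1 - x p.2) := by
        refine sum_le_sum_of_subset_of_nonpos' (by simp [ha, hb]) fun p hp _ => ?_
        rw [mem_product, mem_compl] at hp
        exact sub_nonpos.2 (hx _ hp.1 _ hp.2)
    _ = x a - x b := sum_singleton _ _

end Finset

theorem Fin.card_filter_val_le {k j : ℕ} (hj : j < k) :
    #{i : Fin k | (i : ℕ) ≤ j} = j + 1 := by
  have : ({i : Fin k | (i : ℕ) ≤ j} : Finset (Fin k)) = Iic ⟨j, hj⟩ := by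
    ext i; simp [Fin.le_def]
  rw [this, Fin.card_Iic]

theorem geoMean_pos {k : ℕ} {θ : Fin k → ℝ} (hθ : ∀ i, 0 < θ i) : 0 < geoMean θ :=
  Real.rpow_pos_of_pos (prod_pos fun i _ => hθ i) _

theorem log_prod_div_geoMean_pow {k : ℕ} {θ : Fin k → ℝ} (hθ : ∀ i, 0 < θ i)
    (s : Finset (Fin k)) (n : ℕ) :
    Real.log ((∏ i ∈ s, θ i) / geoMean θ ^ n) =
      ∑ i ∈ s, Real.log (θ i) - n / k * ∑ i, Real.log (θ i) := by
  rw [Real.log_div (prod_pos fun i _ => hθ i).ne' (pow_pos (geoMean_pos hθ) n).ne',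
    Real.log_pow, geoMean, Real.log_rpow (prod_pos fun i _ => hθ i),
    Real.log_prod fun i _ => (hθ i).ne', Real.log_prod fun i _ => (hθ i).ne']
  ring

theorem prod_div_geoMean_pow_le {k : ℕ} {θ : Fin k → ℝ} (hθ : ∀ i, 0 < θ i)
    (hmono : Monotone θ) {j : ℕ} (hj : j + 2 ≤ k) :
    (∏ i ∈ univ.filter fun i : Fin k => (i : ℕ) ≤ j, θ i) / geoMean θ ^ (j + 1) ≤
      (θ ⟨k - 2, by omega⟩ / θ ⟨k - 1, by omega⟩) ^ ((1 : ℝ) / k) := by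
  set A : Finset (Fin k) := univ.filter fun i : Fin k => (i : ℕ) ≤ j with hA
  have hlog_le : ∀ i ∈ A, ∀ l ∉ A, Real.log (θ i) ≤ Real.log (θ l) := by
    intro i hi l hl
    simp only [hA, mem_filter, mem_univ, true_and, not_le] at hi hl
    exact Real.log_le_log (hθ i) (hmono (Fin.le_def.2 (by omega)))
  have hbound := card_mul_sum_sub_card_mul_sum_le hlog_le (a := ⟨j, by omega⟩)
    (b := ⟨k - 1, by omega⟩) (by simp [hA]) (by simp only [hA, mem_filter]; omega)
  rw [Fintype.card_fin, Fin.card_filter_val_le (by omega)] at hbound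
  have hj_le : Real.log (θ ⟨j, by omega⟩) ≤ Real.log (θ ⟨k - 2, by omega⟩) :=
    Real.log_le_log (hθ _) (hmono (Fin.mk_le_mk.2 (by omega)))
  have hk : (0 : ℝ) < k := by exact_mod_cast (by omega : 0 < k)
  have hratio := div_pos (hθ ⟨k - 2, by omega⟩) (hθ ⟨k - 1, by omega⟩)
  rw [← Real.log_le_log_iff (div_pos (prod_pos fun i _ => hθ i) (pow_pos (geoMean_pos hθ) _))
    (Real.rpow_pos_of_pos hratio _), log_prod_div_geoMean_pow hθ, Real.log_rpow hratio,
    Real.log_div (hθ _).ne' (hθ _).ne', ← mul_le_mul_iff_of_pos_left hk]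
  field_simp
  push_cast at hbound ⊢
  linarith

/-- **Lemma 5.11**: if `0 < θ₁ ≤ θ₂ ≤ … ≤ θ_k` then
`Θ̃ ≤ (θ_{k−1}/θ_k)^{1/k} ≤ 1`. -/
theorem thetaTilde_le (k : ℕ) (hk : 2 ≤ k) (θ : Fin k → ℝ)
    (hpos : ∀ i, 0 < θ i) (hmono : Monotone θ) :
    ThetaTilde θ ≤ (θ ⟨k - 2, by omega⟩ / θ ⟨k - 1, by omega⟩) ^ ((1 : ℝ) / k) ∧
      (θ ⟨k - 2, by omega⟩ / θ ⟨k - 1, by omega⟩) ^ ((1 : ℝ) / k) ≤ 1 := by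
  have : Nonempty (Fin (k - 1)) := ⟨⟨0, by omega⟩⟩
  refine ⟨ciSup_le fun r => prod_div_geoMean_pow_le hpos hmono (by omega), ?_⟩
  refine Real.rpow_le_one (div_pos (hpos _) (hpos _)).le ?_ (by positivity)
  exact div_le_one_of_le₀ (hmono (Fin.mk_le_mk.2 (by omega))) (hpos _).le
end
end

section
/- Let U ⊆ ℝ be an interval, y: U → ℝ^{n+1} analytic, and let z: U → ℝ^{n+1} be the dual map of y. Then for all x ∈ U and all integers i, j ≥ 0: z^{(j)}(x) · y^{(i)}(x) = 0 whenever 0 ≤ i + j ≤ n − 1, and z^{(j)}(x) · y^{(i)}(x) = (−1)^j W_y(x) whenever i + j = n. -/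
open Filter

noncomputable section

/-- The `(n+1) × (n+1)` matrix whose rows are `y(x), y′(x), …, y^{(n−1)}(x), w`. -/
def borderMatrix {n : ℕ} (y : ℝ → Fin (n + 1) → ℝ) (x : ℝ) (w : Fin (n + 1) → ℝ) :
    Matrix (Fin (n + 1)) (Fin (n + 1)) ℝ :=
  Matrix.of fun i c : Fin (n + 1) =>
    if (i : ℕ) < n then iteratedDeriv (i : ℕ) (fun t => y t c) x else w c

/-- The Wronskian `W_y(x)`: the determinant of the matrix whose rows are
`y(x), y′(x), …, y^{(n)}(x)`. -/
def Wronski {n : ℕ} (y : ℝ → Fin (n + 1) → ℝ) (x : ℝ) : ℝ :=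
  (Matrix.of fun j c : Fin (n + 1) => iteratedDeriv (j : ℕ) (fun t => y t c) x).det

/-!
For `i < n` the determinant `z(x) ⬝ y^{(i)}(x) = det(y, y′, …, y^{(n−1)}, y^{(i)})` has two equal
rows, and for `i = n` it is the Wronskian. Whenever `t ↦ z^{(j)}(t) ⬝ y^{(i)}(t)` vanishes on the
open set `U`, so does its derivative, and the Leibniz rule gives
`z^{(j+1)} ⬝ y^{(i)} = −z^{(j)} ⬝ y^{(i+1)}`. Induction on `j` moves all derivatives from `z`
onto `y`, one sign per step, and reduces everything to the case `j = 0`.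
-/

theorem AnalyticAt.iteratedDeriv {𝕜 F : Type*} [NontriviallyNormedField 𝕜]
    [NormedAddCommGroup F] [NormedSpace 𝕜 F] [CompleteSpace F] {f : 𝕜 → F} {x : 𝕜}
    (hf : AnalyticAt 𝕜 f x) (k : ℕ) : AnalyticAt 𝕜 (iteratedDeriv k f) x := by
  induction k generalizing f with
  | zero => simpa
  | succ k ih => simpa only [iteratedDeriv_succ'] using ih hf.deriv

theorem AnalyticOnNhd.matrix_det {𝕜 m : Type*} [NontriviallyNormedField 𝕜] [Fintype m]
    [DecidableEq m] {M : 𝕜 → Matrix m m 𝕜} {s : Set 𝕜}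
    (hM : ∀ i j, AnalyticOnNhd 𝕜 (fun t => M t i j) s) :
    AnalyticOnNhd 𝕜 (fun t => (M t).det) s := by
  simp only [Matrix.det_apply']
  exact Finset.analyticOnNhd_fun_sum _ fun σ _ =>
    analyticOnNhd_const.mul (Finset.analyticOnNhd_fun_prod _ fun i _ => hM _ _)

section Pairing

variable {ι : Type*} [Fintype ι]

def iteratedDerivPairing (f g : ℝ → ι → ℝ) (j i : ℕ) (t : ℝ) : ℝ :=
  ∑ c, iteratedDeriv j (fun s => f s c) t * iteratedDeriv i (fun s => g s c) t

variable {f g : ℝ → ι → ℝ} {U : Set ℝ}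

theorem hasDerivAt_iteratedDerivPairing {x : ℝ} (hf : ∀ c, AnalyticAt ℝ (fun t => f t c) x)
    (hg : ∀ c, AnalyticAt ℝ (fun t => g t c) x) (j i : ℕ) :
    HasDerivAt (iteratedDerivPairing f g j i)
      (iteratedDerivPairing f g (j + 1) i x + iteratedDerivPairing f g j (i + 1) x) x := by
  have hderiv : ∀ {h : ℝ → ι → ℝ}, (∀ c, AnalyticAt ℝ (fun t => h t c) x) → ∀ k c,
      HasDerivAt (iteratedDeriv k fun t => h t c) (iteratedDeriv (k + 1) (fun t => h t c) x) x :=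
    fun hh k c => by
      rw [iteratedDeriv_succ]
      exact ((hh c).iteratedDeriv k).differentiableAt.hasDerivAt
  unfold iteratedDerivPairing
  rw [← Finset.sum_add_distrib]
  exact HasDerivAt.fun_sum fun c _ => (hderiv hf j c).mul (hderiv hg i c)

theorem iteratedDerivPairing_succ_left (hU : IsOpen U)
    (hf : ∀ c, AnalyticOnNhd ℝ (fun t => f t c) U) (hg : ∀ c, AnalyticOnNhd ℝ (fun t => g t c) U)
    {j i : ℕ} (hvan : ∀ t ∈ U, iteratedDerivPairing f g j i t = 0) {x : ℝ} (hx : x ∈ U) :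
    iteratedDerivPairing f g (j + 1) i x = -iteratedDerivPairing f g j (i + 1) x := by
  have hconst : iteratedDerivPairing f g j i =ᶠ[nhds x] fun _ => 0 :=
    eventually_of_mem (hU.mem_nhds hx) hvan
  have := (hasDerivAt_iteratedDerivPairing (fun c => hf c x hx) (fun c => hg c x hx) j i).unique
    ((hasDerivAt_const x (0 : ℝ)).congr_of_eventuallyEq hconst)
  linarith

theorem iteratedDerivPairing_eq_of_left_zero (hU : IsOpen U)
    (hf : ∀ c, AnalyticOnNhd ℝ (fun t => f t c) U) (hg : ∀ c, AnalyticOnNhd ℝ (fun t => g t c) U)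
    {n : ℕ} {W : ℝ → ℝ} (hlt : ∀ t ∈ U, ∀ i < n, iteratedDerivPairing f g 0 i t = 0)
    (heq : ∀ t ∈ U, iteratedDerivPairing f g 0 n t = W t) (j : ℕ) :
    ∀ x ∈ U, ∀ i,
      (i + j < n → iteratedDerivPairing f g j i x = 0) ∧
      (i + j = n → iteratedDerivPairing f g j i x = (-1) ^ j * W x) := by
  induction j with
  | zero =>
    intro x hx i
    exact ⟨hlt x hx i, fun h => by simp_all⟩
  | succ j ih =>
    intro x hx i
    have hstep : i + j + 1 ≤ n →
        iteratedDerivPairing f g (j + 1) i x = -iteratedDerivPairing f g j (i + 1) x :=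
      fun h => iteratedDerivPairing_succ_left hU hf hg (fun t ht => (ih t ht i).1 (by omega)) hx
    refine ⟨fun h => ?_, fun h => ?_⟩
    · rw [hstep (by omega), (ih x hx (i + 1)).1 (by omega), neg_zero]
    · rw [hstep (by omega), (ih x hx (i + 1)).2 (by omega), pow_succ]
      ring

end Pairing

section DualMap

variable {n : ℕ} {y z : ℝ → Fin (n + 1) → ℝ}

theorem det_borderMatrix_iteratedDeriv_of_lt (x : ℝ) {i : ℕ} (hi : i < n) :
    (borderMatrix y x fun c => iteratedDeriv i (fun t => y t c) x).det = 0 := by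
  refine Matrix.det_zero_of_row_eq (i := ⟨i, by omega⟩) (j := Fin.last n)
    (fun h => by simp only [Fin.ext_iff, Fin.val_last] at h; omega) ?_
  ext c
  simp [borderMatrix, hi]

theorem det_borderMatrix_iteratedDeriv_self (x : ℝ) :
    (borderMatrix y x fun c => iteratedDeriv n (fun t => y t c) x).det = Wronski y x := by
  unfold Wronski
  congr
  ext r c
  by_cases hr : (r : ℕ) < n
  · simp [borderMatrix, hr]
  · simp [borderMatrix, show (r : ℕ) = n by omega]

theorem dual_apply_eq_det (hz : ∀ x w, ∑ c, z x c * w c = (borderMatrix y x w).det) (x : ℝ)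
    (c : Fin (n + 1)) : z x c = (borderMatrix y x (Pi.single c 1)).det := by
  simpa [Pi.single_apply] using hz x (Pi.single c 1)

theorem analyticOnNhd_dual {U : Set ℝ} (hy : ∀ c, AnalyticOnNhd ℝ (fun t => y t c) U)
    (hz : ∀ x w, ∑ c, z x c * w c = (borderMatrix y x w).det) (c : Fin (n + 1)) :
    AnalyticOnNhd ℝ (fun t => z t c) U := by
  simp only [dual_apply_eq_det hz]
  refine AnalyticOnNhd.matrix_det fun r d => ?_
  by_cases hr : (r : ℕ) < n
  · simp only [borderMatrix, Matrix.of_apply, if_pos hr]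
    exact fun x hx => (hy d x hx).iteratedDeriv r
  · simp only [borderMatrix, Matrix.of_apply, if_neg hr]
    exact analyticOnNhd_const

end DualMap

theorem dual_map_identities_general {n : ℕ}
    (U : Set ℝ) (hU : IsOpen U)
    (y : ℝ → Fin (n + 1) → ℝ) (hy : ∀ c, AnalyticOnNhd ℝ (fun t => y t c) U)
    (z : ℝ → Fin (n + 1) → ℝ)
    (hz : ∀ (x : ℝ) (w : Fin (n + 1) → ℝ),
      ∑ c, z x c * w c = (borderMatrix y x w).det) :
    ∀ x ∈ U, ∀ i j : ℕ,
      (i + j < n →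
        ∑ c, iteratedDeriv j (fun t => z t c) x * iteratedDeriv i (fun t => y t c) x
          = 0) ∧
      (i + j = n →
        ∑ c, iteratedDeriv j (fun t => z t c) x * iteratedDeriv i (fun t => y t c) x
          = (-1 : ℝ) ^ j * Wronski y x) := by
  intro x hx i j
  refine iteratedDerivPairing_eq_of_left_zero hU (analyticOnNhd_dual hy hz) hy
    (fun t _ i hi => ?_) (fun t _ => ?_) j x hx i
  · show ∑ c, z t c * _ = 0
    rw [hz]
    exact det_borderMatrix_iteratedDeriv_of_lt t hi
  · show ∑ c, z t c * _ = _
    rw [hz]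
    exact det_borderMatrix_iteratedDeriv_self t

/-- **Lemma 7.3** (differential equations for the dual map): if `z` is the dual map
of `y`, i.e. `z(x) ⬝ w = det(y(x), y′(x), …, y^{(n−1)}(x), w)` for all `w`, then
`z^{(j)} ⬝ y^{(i)} = 0` for `0 ≤ i + j ≤ n − 1` and
`z^{(j)} ⬝ y^{(i)} = (−1)^j W_y` for `i + j = n`. -/
theorem dual_map_identities {n : ℕ} (hn : 1 ≤ n)
    (U : Set ℝ) (hU : IsOpen U) (hconn : U.OrdConnected)
    (y : ℝ → Fin (n + 1) → ℝ) (hy : ∀ c, AnalyticOnNhd ℝ (fun t => y t c) U)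
    (z : ℝ → Fin (n + 1) → ℝ)
    (hz : ∀ (x : ℝ) (w : Fin (n + 1) → ℝ),
      ∑ c, z x c * w c = (borderMatrix y x w).det) :
    ∀ x ∈ U, ∀ i j : ℕ,
      (i + j < n →
        ∑ c, iteratedDeriv j (fun t => z t c) x * iteratedDeriv i (fun t => y t c) x
          = 0) ∧
      (i + j = n →
        ∑ c, iteratedDeriv j (fun t => z t c) x * iteratedDeriv i (fun t => y t c) x
          = (-1 : ℝ) ^ j * Wronski y x) :=
  dual_map_identities_general U hU y hy z hz
end
end
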